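/- arXiv:2202.13925 — 3 statements merged into one kernel-verified Lean document; each statement's English description precedes it below -/
import Mathlib

section
/- Let k ≥ 1 and let the alphabet be A = {0,1}^k (so |A| = 2^k). For any natural numbers n_b ≤ n_o and any fixed string s over A of length n_b, the number of strings f over A of length n_o that contain s as a subsequence equals ∑_{j=0}^{n_o−n_b} C(n_o, j+n_b) · (2^k − 1)^{n_o−n_b−j}. (This is the number m of possible pre-images of an outsourced string under the deletion transformation when the deleted positions are unknown.) -/
/-!
A string `a :: t` contains `c :: s` exactly when either `a = c` and `t` contains `s`, or `a ≠ c`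
and `t` contains `c :: s`. So over an alphabet of `q + 1` letters the number `N n m` of strings of
length `n` containing a fixed string of length `m` satisfies
`N (n + 1) (m + 1) = N n m + q * N n (m + 1)`, with `N n 0 = (q + 1) ^ n` and `N n m = 0` for
`n < m`. By Pascal's rule the partial binomial sums `∑ j ≤ n - m, C(n, j) q ^ j` obey the same
recursion; the sum in the theorem is this one with the summation index reversed.
-/

open Finset

theorem sum_range_choose_succ_mul_pow (n d q : ℕ) :
    ∑ j ∈ range (d + 2), (n + 1).choose j * q ^ j =
      ∑ j ∈ range (d + 2), n.choose j * q ^ j +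
        q * ∑ j ∈ range (d + 1), n.choose j * q ^ j := by
  rw [sum_range_succ' _ (d + 1), sum_range_succ' (fun j => n.choose j * q ^ j) (d + 1), mul_sum]
  have (j : ℕ) : n.choose j * q ^ (j + 1) = q * (n.choose j * q ^ j) := by ring
  simp only [Nat.choose_succ_succ', add_mul, sum_add_distrib, Nat.choose_zero_right, this]
  ring

theorem sum_range_choose_mul_pow_reflect {m n : ℕ} (h : m ≤ n) (q : ℕ) :
    ∑ j ∈ range (n - m + 1), n.choose j * q ^ j =
      ∑ j ∈ range (n - m + 1), n.choose (j + m) * q ^ (n - m - j) := by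
  rw [← sum_range_reflect]
  refine sum_congr rfl fun j hj => ?_
  rw [mem_range] at hj
  rw [← Nat.choose_symm (by omega : j + m ≤ n)]
  congr 2
  omega

namespace List

variable {α : Type*}

def lengthSuccEquivSigma (P : List α → Prop) (n : ℕ) :
    {f : List α // f.length = n + 1 ∧ P f} ≃
      Σ a : α, {t : List α // t.length = n ∧ P (a :: t)} where
  toFun
    | ⟨a :: t, hl, hP⟩ => ⟨a, t, Nat.succ_injective hl, hP⟩
  invFun
    | ⟨a, t, hl, hP⟩ => ⟨a :: t, by simp [hl], hP⟩
  left_inv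
    | ⟨_ :: _, _, _⟩ => rfl
  right_inv
    | ⟨_, _, _, _⟩ => rfl

theorem cons_sublist_cons_iff_of_ne {a c : α} (h : a ≠ c) {s t : List α} :
    (c :: s).Sublist (a :: t) ↔ (c :: s).Sublist t := by
  simp [sublist_cons_iff, Ne.symm h]

variable [Fintype α]

theorem ncard_length_succ_and (P : List α → Prop) (n : ℕ) :
    {f : List α | f.length = n + 1 ∧ P f}.ncard =
      ∑ a, {t : List α | t.length = n ∧ P (a :: t)}.ncard := by
  have (a : α) : Finite {t : List α // t.length = n ∧ P (a :: t)} :=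
    ((finite_length_eq α n).subset fun _ ht => ht.1).to_subtype
  simp only [← Nat.card_coe_set_eq]
  exact (Nat.card_congr (lengthSuccEquivSigma P n)).trans Nat.card_sigma

theorem ncard_length_eq (n : ℕ) :
    {f : List α | f.length = n}.ncard = Fintype.card α ^ n := by
  rw [← Nat.card_coe_set_eq, ← card_vector, ← Nat.card_eq_fintype_card]
  rfl

theorem ncard_length_eq_and_sublist_cons (c : α) (s : List α) (n : ℕ) :
    {f : List α | f.length = n + 1 ∧ (c :: s).Sublist f}.ncard =
      {f : List α | f.length = n ∧ s.Sublist f}.ncard +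
        (Fintype.card α - 1) * {f : List α | f.length = n ∧ (c :: s).Sublist f}.ncard := by
  classical
  rw [ncard_length_succ_and, ← Finset.add_sum_erase _ _ (mem_univ c)]
  simp only [cons_sublist_cons]
  have hne (a) (ha : a ∈ univ.erase c) :
      {t : List α | t.length = n ∧ (c :: s).Sublist (a :: t)}.ncard =
        {t : List α | t.length = n ∧ (c :: s).Sublist t}.ncard := by
    simp only [cons_sublist_cons_iff_of_ne (ne_of_mem_erase ha)]
  rw [sum_congr rfl hne, sum_const, card_erase_of_mem (mem_univ c), card_univ, smul_eq_mul]

theorem ncard_length_eq_and_sublist [Nonempty α] {n : ℕ} (s : List α) (hs : s.length ≤ n) :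
    {f : List α | f.length = n ∧ s.Sublist f}.ncard =
      ∑ j ∈ Finset.range (n - s.length + 1), n.choose j * (Fintype.card α - 1) ^ j := by
  induction n generalizing s with
  | zero =>
    obtain rfl : s = [] := eq_nil_of_length_eq_zero (Nat.le_zero.mp hs)
    simp
  | succ n ih =>
    cases s with
    | nil =>
      have hq : Fintype.card α - 1 + 1 = Fintype.card α :=
        Nat.sub_add_cancel Fintype.card_pos
      simp only [nil_sublist, and_true, ncard_length_eq, length_nil]
      rw [← hq, add_pow]
      simp [mul_comm]
    | cons c s =>
      rw [ncard_length_eq_and_sublist_cons, ih s (by simpa using hs)]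
      rcases (Nat.le_of_succ_le_succ hs).eq_or_lt with hn | hn
      · have hempty : {f : List α | f.length = n ∧ (c :: s).Sublist f} = ∅ :=
          Set.eq_empty_of_forall_notMem fun f ⟨hf, hsf⟩ => by
            simpa [hf, hn] using hsf.length_le
        simp [hempty, hn]
      · rw [ih (c :: s) hn]
        obtain ⟨d, hd⟩ : ∃ d, n - s.length = d + 1 := ⟨n - s.length - 1, by omega⟩
        rw [length_cons, Nat.add_sub_add_right, hd, show n - (s.length + 1) = d by omega,
          sum_range_choose_succ_mul_pow]

end List

theorem bonsai_preimage_count_general (k n_b n_o : ℕ) (h : n_b ≤ n_o)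
    (s : List (Fin (2 ^ k))) (hs : s.length = n_b) :
    {f : List (Fin (2 ^ k)) | f.length = n_o ∧ s.Sublist f}.ncard =
      ∑ j ∈ Finset.range (n_o - n_b + 1),
        n_o.choose (j + n_b) * (2 ^ k - 1) ^ (n_o - n_b - j) := by
  rw [List.ncard_length_eq_and_sublist s (hs ▸ h), Fintype.card_fin, hs,
    sum_range_choose_mul_pow_reflect h]

/-- The number of strings `f` of length `n_o` over the alphabet `Fin (2^k)` that contain a
fixed string `s` of length `n_b` as a subsequence equals
`∑_{j=0}^{n_o-n_b} C(n_o, j+n_b) (2^k - 1)^{n_o-n_b-j}`. -/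
theorem bonsai_preimage_count (k n_b n_o : ℕ) (hk : 1 ≤ k) (h : n_b ≤ n_o)
    (s : List (Fin (2 ^ k))) (hs : s.length = n_b) :
    {f : List (Fin (2 ^ k)) | f.length = n_o ∧ s.Sublist f}.ncard =
      ∑ j ∈ Finset.range (n_o - n_b + 1),
        n_o.choose (j + n_b) * (2 ^ k - 1) ^ (n_o - n_b - j) :=
  bonsai_preimage_count_general k n_b n_o h s hs
end

section
/- Let k ≥ 1 and let the alphabet be A = {0,1}^k. For any n_b ≤ n_o, the number of strings of length n_o over A containing a fixed string s of length n_b as a subsequence does not depend on s: for any two strings s and s' over A, each of length n_b, the sets {f : |f| = n_o, s is a subsequence of f} and {f : |f| = n_o, s' is a subsequence of f} have the same cardinality. -/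
/-!
Given `s` and `s'` of equal length, there is an explicit length-preserving bijection between the
strings containing `s` and those containing `s'` as a subsequence. Embed `s = a :: t` greedily
into `f = u ++ a :: v`, so that `a ∉ u`; replace the matched `a` by `a'` and apply the
transposition `(a a')` to the prefix `u`, then recurse on `t, v`. The new prefix avoids `a'`, so the
greedy embedding of `s'` into the image matches at the same positions, and the same procedure
with `s` and `s'` exchanged undoes the map.
-/

open List

variable {α : Type*}

lemma exists_eq_append_cons_of_cons_sublist {a : α} {t f : List α} (h : (a :: t) <+ f) :
    ∃ u v, f = u ++ a :: v ∧ a ∉ u ∧ t <+ v := by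
  induction f with
  | nil => exact absurd h (by simp)
  | cons b f ih =>
    cases h with
    | cons _ h =>
      by_cases hb : b = a
      · exact ⟨[], f, by rw [hb]; rfl, not_mem_nil, (sublist_cons_self a t).trans h⟩
      · obtain ⟨u, v, rfl, hu, htv⟩ := ih h
        exact ⟨b :: u, v, rfl, by simp [Ne.symm hb, hu], htv⟩
    | cons_cons _ h => exact ⟨[], f, rfl, not_mem_nil, h⟩

variable [DecidableEq α]

def recode : List α → List α → List α → List α
  | a :: t, a' :: t', f =>
    match f.dropWhile (· ≠ a) with
    | [] => f
    | _ :: v => (f.takeWhile (· ≠ a)).map (Equiv.swap a a') ++ a' :: recode t t' v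
  | _, _, f => f

lemma recode_append_cons {a a' : α} {t t' u v : List α} (hu : a ∉ u) :
    recode (a :: t) (a' :: t') (u ++ a :: v) = u.map (Equiv.swap a a') ++ a' :: recode t t' v := by
  have hu' : ∀ x ∈ u, (x ≠ a : Bool) := fun x hx => by
    simpa using fun h : x = a => hu (h ▸ hx)
  rw [recode, dropWhile_append_of_pos hu', dropWhile_cons_of_neg (by simp),
    takeWhile_append_of_pos hu', takeWhile_cons_of_neg (by simp), append_nil]

lemma length_recode : ∀ {s s' f : List α}, s <+ f → (recode s s' f).length = f.length
  | [], _, _, _ => by simp [recode]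
  | _ :: _, [], _, _ => by simp [recode]
  | _ :: _, _ :: _, _, h => by
    obtain ⟨u, v, rfl, hu, htv⟩ := exists_eq_append_cons_of_cons_sublist h
    simp [recode_append_cons hu, length_recode htv]

lemma sublist_recode :
    ∀ {s s' f : List α}, s.length = s'.length → s <+ f → s' <+ recode s s' f
  | [], [], _, _, _ => nil_sublist _
  | _ :: _, _ :: _, _, hlen, h => by
    obtain ⟨u, v, rfl, hu, htv⟩ := exists_eq_append_cons_of_cons_sublist h
    rw [recode_append_cons hu]
    exact (sublist_recode (Nat.succ.inj hlen) htv).cons_cons _ |>.trans (sublist_append_right _ _)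

lemma recode_recode :
    ∀ {s s' f : List α}, s.length = s'.length → s <+ f → recode s' s (recode s s' f) = f
  | [], [], _, _, _ => by simp [recode]
  | a :: _, a' :: _, _, hlen, h => by
    obtain ⟨u, v, rfl, hu, htv⟩ := exists_eq_append_cons_of_cons_sublist h
    have hu' : a' ∉ u.map (Equiv.swap a a') := by
      simpa [Equiv.swap_apply_eq_iff] using hu
    rw [recode_append_cons hu, recode_append_cons hu', recode_recode (Nat.succ.inj hlen) htv,
      map_map, Equiv.swap_comm a' a, Function.comp_def]
    simp only [Equiv.swap_apply_self, map_id']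

lemma mapsTo_recode {s s' : List α} (hlen : s.length = s'.length) (n : ℕ) :
    Set.MapsTo (recode s s') {f | f.length = n ∧ s <+ f} {f | f.length = n ∧ s' <+ f} :=
  fun _ ⟨hn, hf⟩ => ⟨(length_recode hf).trans hn, sublist_recode hlen hf⟩

theorem bonsai_preimage_count_independent_general (k n_b n_o : ℕ)
    (s s' : List (Fin (2 ^ k))) (hs : s.length = n_b) (hs' : s'.length = n_b) :
    {f : List (Fin (2 ^ k)) | f.length = n_o ∧ s.Sublist f}.ncard =
      {f : List (Fin (2 ^ k)) | f.length = n_o ∧ s'.Sublist f}.ncard := by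
  have hlen : s.length = s'.length := hs.trans hs'.symm
  have hinv : Set.InvOn (recode s' s) (recode s s') {f | f.length = n_o ∧ s <+ f}
      {f | f.length = n_o ∧ s' <+ f} :=
    ⟨fun _ hf => recode_recode hlen hf.2, fun _ hg => recode_recode hlen.symm hg.2⟩
  exact (hinv.bijOn (mapsTo_recode hlen n_o) (mapsTo_recode hlen.symm n_o)).ncard_eq

/-- The number of strings of length `n_o` over `Fin (2^k)` containing a fixed string of
length `n_b` as a subsequence does not depend on the fixed string. -/
theorem bonsai_preimage_count_independent (k n_b n_o : ℕ) (hk : 1 ≤ k) (h : n_b ≤ n_o)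
    (s s' : List (Fin (2 ^ k))) (hs : s.length = n_b) (hs' : s'.length = n_b) :
    {f : List (Fin (2 ^ k)) | f.length = n_o ∧ s.Sublist f}.ncard =
      {f : List (Fin (2 ^ k)) | f.length = n_o ∧ s'.Sublist f}.ncard :=
  bonsai_preimage_count_independent_general k n_b n_o s s' hs hs'
end

section
/- Let k ≥ 1, let A = Fin (2^k), and let n_b ≤ n_o. Let s be a string over A of length n_b and let P be the (finite, nonempty) set of strings over A of length n_o containing s as a subsequence. If F is a random variable uniformly distributed on P, then the base-2 Shannon entropy of F equals log₂(∑_{j=0}^{n_o−n_b} C(n_o, j+n_b) · (2^k − 1)^{n_o−n_b−j}). (This is the uncertainty U faced by a weak adversary that cannot break the PRNG.) -/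
/-- The set of pre-images of an outsource `s`: strings of length `n_o` over `Fin (2^k)`
containing `s` as a subsequence. -/
def preimages (k n_o : ℕ) (s : List (Fin (2 ^ k))) : Set (List (Fin (2 ^ k))) :=
  {f : List (Fin (2 ^ k)) | f.length = n_o ∧ s.Sublist f}

/-- The probability mass function of a random variable uniformly distributed on a set `P`. -/
noncomputable def uniformOn {α : Type*} (P : Set α) : α → ℝ :=
  P.indicator fun _ => ((P.ncard : ℝ))⁻¹

/-- Base-2 Shannon entropy of a probability mass function. -/
noncomputable def shannonEntropy {α : Type*} (p : α → ℝ) : ℝ :=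
  -∑' a, p a * Real.logb 2 (p a)

/-!
Under the uniform distribution on a finite set the entropy is `log₂` of its size, so the claim
is a count of the length-`n` supersequences of `s` over a `q`-letter alphabet. Splitting on the
first letter, which either matches the head `a` of `s` or is one of the `q - 1` others, gives
`N(a :: t, n + 1) = N(t, n) + (q - 1) N(a :: t, n)`, with `N([], n) = q ^ n`. The sums
`S(m, n) = ∑_{m ≤ i ≤ n} C(n, i) (q - 1)^(n - i)` obey the same recursion by Pascal's rule and
`S(0, n) = q ^ n` by the binomial theorem, so `N(s, n) = S(|s|, n)`.
-/

open Finset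

-- For empty or infinite `P` both sides vanish: `ncard` is `0` there, `0⁻¹ = 0` and `logb 2 0 = 0`.
theorem shannonEntropy_uniformOn {α : Type*} (P : Set α) :
    shannonEntropy (uniformOn P) = Real.logb 2 P.ncard := by
  by_cases hP : P.ncard = 0
  · have h0 : uniformOn P = 0 := by
      funext a
      simp [uniformOn, hP]
    simp [shannonEntropy, h0, hP]
  lift P to Finset α using Set.finite_of_ncard_ne_zero hP
  rw [Set.ncard_coe_finset] at hP ⊢
  have hterm : ∀ a ∈ P, uniformOn (P : Set α) a * Real.logb 2 (uniformOn (P : Set α) a) =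
      (#P : ℝ)⁻¹ * Real.logb 2 (#P : ℝ)⁻¹ := fun a ha => by
    simp [uniformOn, Set.indicator_of_mem (Finset.mem_coe.2 ha)]
  rw [shannonEntropy, tsum_eq_sum (s := P) fun a ha => by simp [uniformOn, ha],
    sum_congr rfl hterm, sum_const, nsmul_eq_mul, Real.logb_inv]
  field_simp

theorem sum_Ico_choose_mul_pow_succ {R : Type*} [CommSemiring R] (x : R) (m n : ℕ) :
    ∑ i ∈ Ico (m + 1) (n + 2), ((n + 1).choose i : R) * x ^ (n + 1 - i) =
      ∑ i ∈ Ico m (n + 1), (n.choose i : R) * x ^ (n - i) +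
        x * ∑ i ∈ Ico (m + 1) (n + 1), (n.choose i : R) * x ^ (n - i) := by
  rcases lt_or_ge n m with hnm | hmn
  · rw [Ico_eq_empty_of_le (by omega : n + 2 ≤ m + 1), Ico_eq_empty_of_le (by omega : n + 1 ≤ m),
      Ico_eq_empty_of_le (by omega : n + 1 ≤ m + 1)]
    simp
  have hupper : ∑ i ∈ Ico m (n + 1), (n.choose (i + 1) : R) * x ^ (n - i) =
      x * ∑ i ∈ Ico (m + 1) (n + 1), (n.choose i : R) * x ^ (n - i) := by
    rw [sum_Ico_succ_top hmn, Nat.choose_succ_self, Nat.cast_zero, zero_mul, add_zero,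
      ← sum_Ico_add', mul_sum]
    refine sum_congr rfl fun i hi => ?_
    rw [show n - i = n - (i + 1) + 1 by grind, pow_succ]
    ring
  rw [← sum_Ico_add', ← hupper, ← sum_add_distrib]
  refine sum_congr rfl fun i _ => ?_
  rw [Nat.choose_succ_succ', Nat.cast_add, add_mul, Nat.add_sub_add_right]

theorem sum_Ico_choose_mul_pow_eq_sum_range {R : Type*} [CommSemiring R] (x : R) (m n : ℕ) :
    ∑ i ∈ Ico m (n + 1), (n.choose i : R) * x ^ (n - i) =
      ∑ j ∈ range (n - m + 1), (n.choose (j + m) : R) * x ^ (n - m - j) := by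
  rcases lt_or_ge n m with hnm | hmn
  · simp [Ico_eq_empty_of_le (Nat.succ_le_of_lt hnm), Nat.sub_eq_zero_of_le hnm.le,
      Nat.choose_eq_zero_of_lt hnm]
  rw [sum_Ico_eq_sum_range, Nat.sub_add_comm hmn]
  exact sum_congr rfl fun j _ => by rw [add_comm m j, Nat.sub_sub, add_comm m j]

def supersequences {α : Type*} (s : List α) (n : ℕ) : Set (List α) :=
  {f | f.length = n ∧ s.Sublist f}

section Supersequences

variable {α : Type*} [Fintype α]

theorem ncard_setOf_length_succ_eq_sum (P : List α → Prop) (n : ℕ) :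
    {f : List α | f.length = n + 1 ∧ P f}.ncard =
      ∑ b, {f : List α | f.length = n ∧ P (b :: f)}.ncard := by
  have hunion : {f : List α | f.length = n + 1 ∧ P f} =
      ⋃ b, (b :: ·) '' {f : List α | f.length = n ∧ P (b :: f)} := by
    ext (_ | ⟨b, f⟩) <;> simp
  rw [hunion, Set.ncard_iUnion_of_finite, finsum_eq_sum_of_fintype]
  · exact sum_congr rfl fun b _ => Set.ncard_image_of_injective _ List.cons_injective
  · exact fun b => ((List.finite_length_eq α n).subset fun f hf => hf.1).image _
  · intro b c hbc
    simp only [Function.onFun, Set.disjoint_left, Set.mem_image]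
    rintro _ ⟨f, -, rfl⟩ ⟨g, -, hg⟩
    exact hbc (List.cons_eq_cons.1 hg).1.symm

theorem ncard_supersequences_nil (n : ℕ) :
    (supersequences ([] : List α) n).ncard = Fintype.card α ^ n := by
  simp only [supersequences, List.nil_sublist, and_true]
  change Nat.card (List.Vector α n) = _
  rw [Nat.card_eq_fintype_card, card_vector]

theorem ncard_supersequences_cons_succ [DecidableEq α] (a : α) (t : List α) (n : ℕ) :
    (supersequences (a :: t) (n + 1)).ncard =
      (supersequences t n).ncard + (Fintype.card α - 1) * (supersequences (a :: t) n).ncard := by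
  have hne : ∀ b ∈ ({a}ᶜ : Finset α),
      {f : List α | f.length = n ∧ (a :: t).Sublist (b :: f)} = supersequences (a :: t) n :=
    fun b hb => by
      have hab : a ≠ b := fun h => by simp [h] at hb
      ext f
      simp [supersequences, List.cons_sublist_cons', hab]
  rw [supersequences, ncard_setOf_length_succ_eq_sum, Fintype.sum_eq_add_sum_compl a,
    sum_congr rfl fun b hb => congrArg Set.ncard (hne b hb), sum_const, card_compl,
    card_singleton, smul_eq_mul]
  simp only [List.cons_sublist_cons]
  rfl

theorem ncard_supersequences [Nonempty α] (s : List α) (n : ℕ) :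
    (supersequences s n).ncard =
      ∑ i ∈ Ico s.length (n + 1), n.choose i * (Fintype.card α - 1) ^ (n - i) := by
  classical
  induction n generalizing s with
  | zero =>
    cases s with
    | nil => simp [ncard_supersequences_nil]
    | cons a t =>
      have hempty : supersequences (a :: t) 0 = ∅ :=
        Set.eq_empty_of_forall_notMem fun f ⟨hf, hs⟩ => by
          simp [List.length_eq_zero_iff.1 hf] at hs
      simp [hempty]
  | succ n ih =>
    cases s with
    | nil =>
      obtain ⟨x, hx⟩ := Nat.exists_eq_add_one_of_ne_zero (Fintype.card_ne_zero (α := α))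
      rw [ncard_supersequences_nil, hx, Nat.add_sub_cancel, List.length_nil,
        Nat.Ico_zero_eq_range, add_comm x, add_pow]
      exact sum_congr rfl fun i _ => by rw [one_pow, one_mul, mul_comm, Nat.cast_id]
    | cons a t =>
      rw [ncard_supersequences_cons_succ, ih, ih, List.length_cons]
      exact_mod_cast (sum_Ico_choose_mul_pow_succ _ _ _).symm

end Supersequences

theorem bonsai_weak_adversary_uncertainty_general (k n_b n_o : ℕ)
    (s : List (Fin (2 ^ k))) (hs : s.length = n_b) :
    shannonEntropy (uniformOn (preimages k n_o s)) =
      Real.logb 2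
        ((∑ j ∈ Finset.range (n_o - n_b + 1),
          n_o.choose (j + n_b) * (2 ^ k - 1) ^ (n_o - n_b - j) : ℕ) : ℝ) := by
  rw [shannonEntropy_uniformOn, show preimages k n_o s = supersequences s n_o from rfl,
    ncard_supersequences, Fintype.card_fin, hs]
  congr 2
  exact_mod_cast sum_Ico_choose_mul_pow_eq_sum_range _ _ _

/-- The uncertainty faced by a weak adversary that cannot break the PRNG: the entropy of a
uniform distribution on the set of pre-images of the outsource `s` equals
`log₂(∑_{j=0}^{n_o-n_b} C(n_o, j+n_b) (2^k-1)^{n_o-n_b-j})`. -/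
theorem bonsai_weak_adversary_uncertainty (k n_b n_o : ℕ) (hk : 1 ≤ k) (h : n_b ≤ n_o)
    (s : List (Fin (2 ^ k))) (hs : s.length = n_b) :
    shannonEntropy (uniformOn (preimages k n_o s)) =
      Real.logb 2
        ((∑ j ∈ Finset.range (n_o - n_b + 1),
          n_o.choose (j + n_b) * (2 ^ k - 1) ^ (n_o - n_b - j) : ℕ) : ℝ) :=
  bonsai_weak_adversary_uncertainty_general k n_b n_o s hs
end
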